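/- arXiv:1610.01701 — 2 statements merged into one kernel-verified Lean document; each statement's English description precedes it below -/
import Mathlib

section
/- Let f : ℝ × ℝ → ℝ be nonnegative measurable, Φ : ℝ³ → ℝ axisymmetric (depending only on R = √(x²+y²) and z), and define F(r,v) = f(E, L_z) with E = ‖v‖²/2 + Φ(r) and L_z = x·v_y − y·v_x. Then the density ρ(r) = ∫_{ℝ³} F(r,v) dv equals (2π/R)·∬_{L_z² ≤ 2R²(E − Φ)} f(E, L_z) dE dL_z for R > 0; in particular, at fixed R the density depends on z only through Φ(R,z). -/
/-!
Rotating velocity space about the `z`-axis preserves `‖v‖` and Lebesgue measure and turns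
`L_z = x v_y - y v_x` into `R w₀`. Fubini separates `w₀` from the two other components; polar
coordinates in those, with `E = ‖w‖²/2 + Φ` as the new radial variable, give
`2π ∫_{E > Φ + w₀²/2} dE`. Finally `L_z = R w₀` contributes the factor `1/R` and turns
`E ≥ Φ + w₀²/2` into `L_z² ≤ 2R²(E - Φ)`.
-/

open MeasureTheory Set ENNReal Real

theorem lintegral_comp_norm_inner {F : Type*} [NormedAddCommGroup F] [InnerProductSpace ℝ F]
    [FiniteDimensional ℝ F] [MeasurableSpace F] [BorelSpace F] {ι : Type*} [Fintype ι]
    (hι : Module.finrank ℝ F = Fintype.card ι) {u : F} (hu : ‖u‖ = 1) (i : ι)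
    (g : ℝ → ℝ → ℝ≥0∞) :
    ∫⁻ v, g ‖v‖ (inner ℝ u v) = ∫⁻ w : EuclideanSpace ℝ ι, g ‖w‖ (w i) := by
  have hon : Orthonormal ℝ (({i} : Set ι).domRestrict fun _ => u) := by
    rw [orthonormal_iff_ite]
    intro j k
    simp [Subsingleton.elim j k, Set.domRestrict, hu]
  obtain ⟨b, hb⟩ := hon.exists_orthonormalBasis_extension_of_card_eq hι
  have hbi : b i = u := hb i rfl
  rw [← b.measurePreserving_measurableEquiv.lintegral_comp_emb
    b.measurableEquiv.measurableEmbedding]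
  refine lintegral_congr fun v => ?_
  simp [OrthonormalBasis.measurableEquiv, b.repr_apply_apply, hbi]

theorem lintegral_Ioi_mul_comp_half_sq_add (g : ℝ → ℝ≥0∞) (c : ℝ) :
    ∫⁻ r in Ioi (0 : ℝ), ENNReal.ofReal r * g (r ^ 2 / 2 + c) = ∫⁻ E in Ioi c, g E := by
  have himage : (fun r => r ^ 2 / 2 + c) '' Ioi 0 = Ioi c := by
    ext E
    constructor
    · rintro ⟨r, hr, rfl⟩
      exact lt_add_of_pos_left c (div_pos (pow_pos hr 2) two_pos)
    · intro (hE : c < E)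
      refine ⟨√(2 * (E - c)), Real.sqrt_pos.2 (by linarith), ?_⟩
      change √(2 * (E - c)) ^ 2 / 2 + c = E
      rw [Real.sq_sqrt (by linarith)]
      ring
  have hderiv : ∀ r ∈ Ioi (0 : ℝ), HasDerivWithinAt (fun r => r ^ 2 / 2 + c) r (Ioi 0) r :=
    fun r _ => ((((hasDerivAt_pow 2 r).div_const 2).add_const c).congr_deriv
      (by norm_num)).hasDerivWithinAt
  have hinj : InjOn (fun r => r ^ 2 / 2 + c) (Ioi 0) := fun a ha b hb hab =>
    (pow_left_strictMonoOn₀ two_ne_zero).injOn (le_of_lt ha) (le_of_lt hb) (by simpa using hab)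
  rw [← himage, lintegral_image_eq_lintegral_abs_deriv_mul measurableSet_Ioi hderiv hinj g]
  exact setLIntegral_congr_fun measurableSet_Ioi fun r hr => by rw [abs_of_pos hr]

theorem lintegral_prod_comp_half_sq_add {g : ℝ → ℝ≥0∞} (hg : Measurable g) (c : ℝ) :
    ∫⁻ p : ℝ × ℝ, g ((p.1 ^ 2 + p.2 ^ 2) / 2 + c) =
      ENNReal.ofReal (2 * π) * ∫⁻ E in Ioi c, g E := by
  rw [← lintegral_comp_polarCoord_symm]
  have hnorm : ∀ p : ℝ × ℝ, (polarCoord.symm p).1 ^ 2 + (polarCoord.symm p).2 ^ 2 = p.1 ^ 2 := by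
    intro p
    simp only [polarCoord_symm_apply, mul_pow, ← mul_add, cos_sq_add_sin_sq, mul_one]
  have hm : Measurable fun p : ℝ × ℝ => ENNReal.ofReal p.1 * g (p.1 ^ 2 / 2 + c) :=
    (ENNReal.measurable_ofReal.comp measurable_fst).mul (hg.comp (by fun_prop))
  simp only [hnorm, smul_eq_mul]
  rw [polarCoord_target, Measure.volume_eq_prod, ← Measure.prod_restrict,
    lintegral_prod _ hm.aemeasurable]
  simp only [lintegral_const, Measure.restrict_apply MeasurableSet.univ, univ_inter,
    Real.volume_Ioo]
  rw [lintegral_mul_const' _ _ (by simp), lintegral_Ioi_mul_comp_half_sq_add, mul_comm]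
  congr 2
  ring

theorem lintegral_euclideanSpace_fin_three_comp_half_sq_add {g : ℝ × ℝ → ℝ≥0∞}
    (hg : Measurable g) (c : ℝ) :
    ∫⁻ w : EuclideanSpace ℝ (Fin 3), g (‖w‖ ^ 2 / 2 + c, w 0) =
      ENNReal.ofReal (2 * π) * ∫⁻ t, ∫⁻ E in Ioi (t ^ 2 / 2 + c), g (E, t) := by
  have hsplit : ∫⁻ w : EuclideanSpace ℝ (Fin 3), g (‖w‖ ^ 2 / 2 + c, w 0) =
      ∫⁻ q : ℝ × (Fin 2 → ℝ), g ((q.2 0 ^ 2 + q.2 1 ^ 2) / 2 + (q.1 ^ 2 / 2 + c), q.1) := by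
    rw [← (EuclideanSpace.volume_preserving_symm_measurableEquiv_toLp (Fin 3)).symm
        |>.lintegral_comp_emb (MeasurableEquiv.measurableEmbedding _),
      ← (volume_preserving_piFinSuccAbove (fun _ : Fin 3 => ℝ) 0).symm.lintegral_comp_emb
      (MeasurableEquiv.measurableEmbedding _)]
    refine lintegral_congr fun q => ?_
    simp [EuclideanSpace.norm_sq_eq, Fin.sum_univ_succ, add_div, add_comm, add_assoc]
  rw [hsplit, Measure.volume_eq_prod, lintegral_prod _ (by fun_prop),
    ← lintegral_const_mul' _ _ ofReal_ne_top]
  refine lintegral_congr fun t => ?_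
  rw [← (volume_preserving_finTwoArrow ℝ).symm.lintegral_comp_emb
    (MeasurableEquiv.measurableEmbedding _)]
  simp only [MeasurableEquiv.finTwoArrow_symm_apply]
  exact lintegral_prod_comp_half_sq_add (g := fun E => g (E, t)) (by fun_prop) _

theorem lintegral_lintegral_Ioi_eq_setLIntegral {h : ℝ × ℝ → ℝ≥0∞} (hh : Measurable h)
    {R : ℝ} (hR : 0 < R) (c : ℝ) :
    ∫⁻ t, ∫⁻ E in Ioi (t ^ 2 / 2 + c), h (E, R * t) =
      ENNReal.ofReal R⁻¹ * ∫⁻ p in {p : ℝ × ℝ | p.2 ^ 2 ≤ 2 * R ^ 2 * (p.1 - c)}, h p := by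
  set S := {p : ℝ × ℝ | p.2 ^ 2 ≤ 2 * R ^ 2 * (p.1 - c)}
  have hS : MeasurableSet S := measurableSet_le (by fun_prop) (by fun_prop)
  have hfiber : ∀ t E, (E, R * t) ∈ S ↔ E ∈ Ici (t ^ 2 / 2 + c) := by
    intro t E
    rw [mem_ofPred_eq, mem_Ici, mul_pow, show 2 * R ^ 2 * (E - c) = R ^ 2 * (2 * (E - c)) by ring,
      mul_le_mul_iff_of_pos_left (by positivity)]
    constructor <;> intro <;> linarith
  set K : ℝ → ℝ≥0∞ := fun L => ∫⁻ E, S.indicator h (E, L)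
  have hK : Measurable K := (hh.indicator hS).lintegral_prod_left'
  calc ∫⁻ t, ∫⁻ E in Ioi (t ^ 2 / 2 + c), h (E, R * t) = ∫⁻ t, K (R * t) := by
        refine lintegral_congr fun t => ?_
        rw [setLIntegral_congr Ioi_ae_eq_Ici, ← lintegral_indicator measurableSet_Ici]
        refine lintegral_congr fun E => ?_
        simp only [indicator, hfiber]
    _ = ENNReal.ofReal |R⁻¹| * ∫⁻ L, K L := by
        rw [← lintegral_map hK (measurable_const_mul R), Real.map_volume_mul_left hR.ne',
          lintegral_smul_measure, smul_eq_mul]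
    _ = _ := by
        rw [abs_of_pos (inv_pos.2 hR), Measure.volume_eq_prod,
          ← lintegral_indicator hS, lintegral_prod_symm _ (hh.indicator hS).aemeasurable]

theorem integral_comp_energy_angularMomentum {f : ℝ → ℝ → ℝ}
    (hf : Measurable fun p : ℝ × ℝ => f p.1 p.2)
    (hf0 : ∀ E L, 0 ≤ f E L) {x y : ℝ} (hR : 0 < √(x ^ 2 + y ^ 2)) (c : ℝ) :
    ∫ v : EuclideanSpace ℝ (Fin 3), f (‖v‖ ^ 2 / 2 + c) (x * v 1 - y * v 0) =
      2 * π / √(x ^ 2 + y ^ 2) *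
        ∫ p : ℝ × ℝ in {p : ℝ × ℝ | p.2 ^ 2 ≤ 2 * (x ^ 2 + y ^ 2) * (p.1 - c)}, f p.1 p.2 := by
  set R := √(x ^ 2 + y ^ 2)
  have hR2 : x ^ 2 + y ^ 2 = R ^ 2 := (sq_sqrt (by positivity)).symm
  set u : EuclideanSpace ℝ (Fin 3) := R⁻¹ • !₂[-y, x, 0]
  have hu : ‖u‖ = 1 := by
    have hnorm : ‖!₂[-y, x, 0]‖ = R := by
      simp [EuclideanSpace.norm_eq, Fin.sum_univ_three, R, add_comm]
    rw [norm_smul, hnorm, norm_inv, norm_of_nonneg hR.le, inv_mul_cancel₀ hR.ne']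
  have hLz : ∀ v : EuclideanSpace ℝ (Fin 3), x * v 1 - y * v 0 = R * inner ℝ u v := by
    intro v
    simp only [u, inner_smul_left, PiLp.inner_apply, RCLike.inner_apply, Fin.sum_univ_three,
      Matrix.cons_val_zero, Matrix.cons_val_one, Matrix.cons_val, map_inv₀, ringHom_apply]
    field_simp
    ring
  set h : ℝ × ℝ → ℝ≥0∞ := fun p => ENNReal.ofReal (f p.1 p.2)
  have hh : Measurable h := ENNReal.measurable_ofReal.comp hf
  have key : ∫⁻ v : EuclideanSpace ℝ (Fin 3), h (‖v‖ ^ 2 / 2 + c, x * v 1 - y * v 0) =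
      ENNReal.ofReal (2 * π / R) * ∫⁻ p in {p : ℝ × ℝ | p.2 ^ 2 ≤ 2 * R ^ 2 * (p.1 - c)}, h p := by
    calc ∫⁻ v : EuclideanSpace ℝ (Fin 3), h (‖v‖ ^ 2 / 2 + c, x * v 1 - y * v 0)
        = ∫⁻ w : EuclideanSpace ℝ (Fin 3), h (‖w‖ ^ 2 / 2 + c, R * w 0) := by
          simp_rw [hLz]
          exact lintegral_comp_norm_inner (by simp) hu (0 : Fin 3)
            (fun a b => h (a ^ 2 / 2 + c, R * b))
      _ = ENNReal.ofReal (2 * π) * ∫⁻ t, ∫⁻ E in Ioi (t ^ 2 / 2 + c), h (E, R * t) :=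
          lintegral_euclideanSpace_fin_three_comp_half_sq_add (g := fun p => h (p.1, R * p.2))
            (by fun_prop) c
      _ = _ := by
          rw [lintegral_lintegral_Ioi_eq_setLIntegral hh hR c, ← mul_assoc,
            ← ofReal_mul (by positivity), ← div_eq_mul_inv]
  have hmeas : Measurable fun v : EuclideanSpace ℝ (Fin 3) =>
      f (‖v‖ ^ 2 / 2 + c) (x * v 1 - y * v 0) :=
    hf.comp (f := fun v => (_, _)) (by fun_prop)
  rw [integral_eq_lintegral_of_nonneg_ae (.of_forall fun _ => hf0 _ _)
      hf.aestronglyMeasurable.restrict,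
    integral_eq_lintegral_of_nonneg_ae (.of_forall fun _ => hf0 _ _)
      hmeas.aestronglyMeasurable,
    hR2, key, toReal_mul, toReal_ofReal (by positivity)]

theorem eq_zero_of_sqrt_sq_add_sq_eq_zero {a b : ℝ} (h : √(a ^ 2 + b ^ 2) = 0) :
    a = 0 ∧ b = 0 := by
  have hle := Real.sqrt_eq_zero'.1 h
  constructor <;> nlinarith [sq_nonneg a, sq_nonneg b]

theorem stmt8_general (f : ℝ → ℝ → ℝ) (Φ : EuclideanSpace ℝ (Fin 3) → ℝ)
    (hf : Measurable (fun p : ℝ × ℝ => f p.1 p.2)) (hf0 : ∀ E L, 0 ≤ f E L) :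
    (∀ r : EuclideanSpace ℝ (Fin 3), 0 < Real.sqrt ((r 0) ^ 2 + (r 1) ^ 2) →
      (∫ v : EuclideanSpace ℝ (Fin 3),
          f (‖v‖ ^ 2 / 2 + Φ r) (r 0 * v 1 - r 1 * v 0)) =
        (2 * Real.pi / Real.sqrt ((r 0) ^ 2 + (r 1) ^ 2)) *
          ∫ p : ℝ × ℝ in {p : ℝ × ℝ |
              p.2 ^ 2 ≤ 2 * ((r 0) ^ 2 + (r 1) ^ 2) * (p.1 - Φ r)},
            f p.1 p.2) ∧
    (∀ r₁ r₂ : EuclideanSpace ℝ (Fin 3),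
      Real.sqrt ((r₁ 0) ^ 2 + (r₁ 1) ^ 2) = Real.sqrt ((r₂ 0) ^ 2 + (r₂ 1) ^ 2) →
      Φ r₁ = Φ r₂ →
      (∫ v : EuclideanSpace ℝ (Fin 3),
          f (‖v‖ ^ 2 / 2 + Φ r₁) (r₁ 0 * v 1 - r₁ 1 * v 0)) =
        ∫ v : EuclideanSpace ℝ (Fin 3),
          f (‖v‖ ^ 2 / 2 + Φ r₂) (r₂ 0 * v 1 - r₂ 1 * v 0)) := by
  have hdensity (r : EuclideanSpace ℝ (Fin 3)) (hr : 0 < √(r 0 ^ 2 + r 1 ^ 2)) :=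
    integral_comp_energy_angularMomentum hf hf0 hr (Φ r)
  refine ⟨hdensity, fun r₁ r₂ hR hΦ => ?_⟩
  rcases (Real.sqrt_nonneg _).eq_or_lt with hR₁ | hR₁
  · obtain ⟨h₁₀, h₁₁⟩ := eq_zero_of_sqrt_sq_add_sq_eq_zero hR₁.symm
    obtain ⟨h₂₀, h₂₁⟩ := eq_zero_of_sqrt_sq_add_sq_eq_zero (hR ▸ hR₁.symm)
    simp only [h₁₀, h₁₁, h₂₀, h₂₁, hΦ]
  · have hsq : r₁ 0 ^ 2 + r₁ 1 ^ 2 = r₂ 0 ^ 2 + r₂ 1 ^ 2 :=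
      (Real.sqrt_inj (by positivity) (by positivity)).1 hR
    rw [hdensity r₁ hR₁, hdensity r₂ (hR ▸ hR₁), hR, hsq, hΦ]

/-- Density of an axisymmetric two-integral distribution `F = f(E, L_z)`:
for `R = √(x²+y²) > 0`,
`ρ = (2π/R)·∬_{L_z² ≤ 2R²(E−Φ)} f(E,L_z) dE dL_z`; at fixed `R` the density
depends on `z` only through the potential. -/
theorem stmt8 (f : ℝ → ℝ → ℝ) (Φ : EuclideanSpace ℝ (Fin 3) → ℝ) (ψ : ℝ → ℝ → ℝ)
    (hf : Measurable (fun p : ℝ × ℝ => f p.1 p.2)) (hf0 : ∀ E L, 0 ≤ f E L)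
    (haxi : ∀ r : EuclideanSpace ℝ (Fin 3),
      Φ r = ψ (Real.sqrt ((r 0) ^ 2 + (r 1) ^ 2)) (r 2)) :
    (∀ r : EuclideanSpace ℝ (Fin 3), 0 < Real.sqrt ((r 0) ^ 2 + (r 1) ^ 2) →
      (∫ v : EuclideanSpace ℝ (Fin 3),
          f (‖v‖ ^ 2 / 2 + Φ r) (r 0 * v 1 - r 1 * v 0)) =
        (2 * Real.pi / Real.sqrt ((r 0) ^ 2 + (r 1) ^ 2)) *
          ∫ p : ℝ × ℝ in {p : ℝ × ℝ |
              p.2 ^ 2 ≤ 2 * ((r 0) ^ 2 + (r 1) ^ 2) * (p.1 - Φ r)},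
            f p.1 p.2) ∧
    (∀ r₁ r₂ : EuclideanSpace ℝ (Fin 3),
      Real.sqrt ((r₁ 0) ^ 2 + (r₁ 1) ^ 2) = Real.sqrt ((r₂ 0) ^ 2 + (r₂ 1) ^ 2) →
      Φ r₁ = Φ r₂ →
      (∫ v : EuclideanSpace ℝ (Fin 3),
          f (‖v‖ ^ 2 / 2 + Φ r₁) (r₁ 0 * v 1 - r₁ 1 * v 0)) =
        ∫ v : EuclideanSpace ℝ (Fin 3),
          f (‖v‖ ^ 2 / 2 + Φ r₂) (r₂ 0 * v 1 - r₂ 1 * v 0)) :=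
  stmt8_general f Φ hf hf0
end

section
/- Let ρ : ℝ³ → ℝ be of the separable form ρ(x,y,z) = ρ₁(x,y) + ρ₂(z) with ρ ≥ 0 everywhere and ρ measurable. If ∫_{ℝ³} ρ < ∞, then ρ = 0 almost everywhere. -/
open MeasureTheory

/-- A nonnegative separable density `ρ(x,y,z) = ρ₁(x,y) + ρ₂(z)` with finite total
mass over `ℝ³` must vanish almost everywhere. -/
theorem stmt15 (ρ₁ : ℝ × ℝ → ℝ) (ρ₂ : ℝ → ℝ)
    (h₁ : Measurable ρ₁) (h₂ : Measurable ρ₂)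
    (hpos : ∀ p : ℝ × ℝ × ℝ, 0 ≤ ρ₁ (p.1, p.2.1) + ρ₂ p.2.2)
    (hint : Integrable (fun p : ℝ × ℝ × ℝ => ρ₁ (p.1, p.2.1) + ρ₂ p.2.2)) :
    (fun p : ℝ × ℝ × ℝ => ρ₁ (p.1, p.2.1) + ρ₂ p.2.2) =ᵐ[volume] 0 := by
  -- `c` is the infimum of `ρ₂`
  have hbdd : BddBelow (Set.range ρ₂) := by
    refine ⟨-ρ₁ (0, 0), ?_⟩
    rintro _ ⟨z, rfl⟩
    have := hpos (0, 0, z); linarith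
  set c := sInf (Set.range ρ₂) with hc
  have hhc : ∀ z, c ≤ ρ₂ z := fun z => csInf_le hbdd ⟨z, rfl⟩
  have hgc : ∀ q : ℝ × ℝ, 0 ≤ ρ₁ q + c := by
    intro q
    have h1 : -ρ₁ q ≤ c := by
      refine le_csInf ⟨ρ₂ 0, ⟨0, rfl⟩⟩ ?_
      rintro _ ⟨z, rfl⟩
      have := hpos (q.1, q.2, z); simp at this; linarith
    linarith
  -- the two nonnegative parts
  set G : ℝ × ℝ × ℝ → ℝ := fun p => ρ₁ (p.1, p.2.1) + c with hG
  set H : ℝ × ℝ × ℝ → ℝ := fun p => ρ₂ p.2.2 - c with hH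
  have hGmeas : Measurable G :=
    (h₁.comp (measurable_fst.prodMk (measurable_fst.comp measurable_snd))).add_const c
  have hHmeas : Measurable H := (h₂.comp (measurable_snd.comp measurable_snd)).sub_const c
  have hGnn : ∀ p, 0 ≤ G p := fun p => hgc _
  have hHnn : ∀ p, 0 ≤ H p := fun p => by simpa [hH] using sub_nonneg.mpr (hhc p.2.2)
  have hsum : ∀ p : ℝ × ℝ × ℝ, ρ₁ (p.1, p.2.1) + ρ₂ p.2.2 = G p + H p := by
    intro p; simp only [hG, hH]; ring
  -- both parts are integrable (dominated by the full density)
  have hGint : Integrable G := by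
    refine hint.mono hGmeas.aestronglyMeasurable (Filter.Eventually.of_forall fun p => ?_)
    rw [Real.norm_eq_abs, Real.norm_eq_abs, abs_of_nonneg (hGnn p), abs_of_nonneg (hpos p)]
    have := hHnn p; rw [hsum p]; linarith
  have hHint : Integrable H := by
    refine hint.mono hHmeas.aestronglyMeasurable (Filter.Eventually.of_forall fun p => ?_)
    rw [Real.norm_eq_abs, Real.norm_eq_abs, abs_of_nonneg (hHnn p), abs_of_nonneg (hpos p)]
    have := hGnn p; rw [hsum p]; linarith
  -- the `(x,y)`-part has zero integral over `ℝ²`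
  set φ : ℝ × ℝ → ENNReal := fun q => ENNReal.ofReal (ρ₁ q + c) with hφ
  have hφmeas : Measurable φ := ENNReal.measurable_ofReal.comp (h₁.add_const c)
  have hφ0 : φ =ᵐ[volume] 0 := by
    have hT : ∫⁻ p : ℝ × ℝ × ℝ, φ (p.1, p.2.1) ∂volume < ⊤ := by
      have := hGint.lintegral_lt_top
      simpa [hφ, hG] using this
    have key : ∫⁻ r : (ℝ × ℝ) × ℝ, φ r.1 ∂volume
        = ∫⁻ p : ℝ × ℝ × ℝ, φ (p.1, p.2.1) ∂volume :=
      MeasureTheory.volume_preserving_prodAssoc.lintegral_comp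
        (f := fun p : ℝ × ℝ × ℝ => φ (p.1, p.2.1))
        (hφmeas.comp (measurable_fst.prodMk (measurable_fst.comp measurable_snd)))
    have hTeq : ∫⁻ p : ℝ × ℝ × ℝ, φ (p.1, p.2.1) ∂volume
        = (∫⁻ q : ℝ × ℝ, φ q ∂volume) * volume (Set.univ : Set ℝ) := by
      rw [← key]
      calc ∫⁻ r : (ℝ × ℝ) × ℝ, φ r.1 ∂volume
          = ∫⁻ q : ℝ × ℝ, ∫⁻ _z : ℝ, φ q ∂volume ∂volume := by
            rw [Measure.volume_eq_prod,
              MeasureTheory.lintegral_prod _ ((by fun_prop : Measurable fun r : (ℝ × ℝ) × ℝ => φ r.1)).aemeasurable]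
        _ = ∫⁻ q : ℝ × ℝ, φ q * volume (Set.univ : Set ℝ) ∂volume := by
            simp [lintegral_const]
        _ = (∫⁻ q : ℝ × ℝ, φ q ∂volume) * volume (Set.univ : Set ℝ) :=
            lintegral_mul_const _ hφmeas
    rw [hTeq] at hT
    have hμ : volume (Set.univ : Set ℝ) = ⊤ := by simp
    rw [hμ] at hT
    have hzero : ∫⁻ q : ℝ × ℝ, φ q ∂volume = 0 := by
      by_contra hne
      rw [ENNReal.mul_top hne] at hT
      exact absurd hT (lt_irrefl _)
    exact (lintegral_eq_zero_iff hφmeas).mp hzero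
  have hG2 : ∀ᵐ q : ℝ × ℝ, ρ₁ q + c = 0 := by
    filter_upwards [hφ0] with q hq
    have h1 := ENNReal.ofReal_eq_zero.mp hq
    have := hgc q
    linarith
  -- the `z`-part has zero integral over `ℝ`
  set ψ : ℝ → ENNReal := fun z => ENNReal.ofReal (ρ₂ z - c) with hψ
  have hψmeas : Measurable ψ := ENNReal.measurable_ofReal.comp (h₂.sub_const c)
  have hψ0 : ψ =ᵐ[volume] 0 := by
    have hT : ∫⁻ p : ℝ × ℝ × ℝ, ψ p.2.2 ∂volume < ⊤ := by
      have := hHint.lintegral_lt_top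
      simpa [hψ, hH] using this
    have inner2 : ∫⁻ q : ℝ × ℝ, ψ q.2 ∂volume
        = (∫⁻ z : ℝ, ψ z ∂volume) * volume (Set.univ : Set ℝ) := by
      rw [Measure.volume_eq_prod,
        MeasureTheory.lintegral_prod _ ((by fun_prop : Measurable fun q : ℝ × ℝ => ψ q.2)).aemeasurable]
      simp [lintegral_const]
    have hTeq : ∫⁻ p : ℝ × ℝ × ℝ, ψ p.2.2 ∂volume
        = (∫⁻ z : ℝ, ψ z ∂volume) * volume (Set.univ : Set ℝ) * volume (Set.univ : Set ℝ) := by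
      calc ∫⁻ p : ℝ × ℝ × ℝ, ψ p.2.2 ∂volume
          = ∫⁻ _x : ℝ, ∫⁻ q : ℝ × ℝ, ψ q.2 ∂volume ∂volume := by
            rw [Measure.volume_eq_prod,
              MeasureTheory.lintegral_prod _ ((by fun_prop : Measurable fun p : ℝ × ℝ × ℝ => ψ p.2.2)).aemeasurable]
        _ = ∫⁻ _x : ℝ, (∫⁻ z : ℝ, ψ z ∂volume) * volume (Set.univ : Set ℝ) ∂volume := by
            rw [inner2]
        _ = (∫⁻ z : ℝ, ψ z ∂volume) * volume (Set.univ : Set ℝ) * volume (Set.univ : Set ℝ) :=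
            lintegral_const _
    rw [hTeq] at hT
    have hμ : volume (Set.univ : Set ℝ) = ⊤ := by simp
    rw [hμ] at hT
    have hzero : ∫⁻ z : ℝ, ψ z ∂volume = 0 := by
      by_contra hne
      rw [ENNReal.mul_top hne, ENNReal.top_mul (by simp)] at hT
      exact absurd hT (lt_irrefl _)
    exact (lintegral_eq_zero_iff hψmeas).mp hzero
  have hH2 : ∀ᵐ z : ℝ, ρ₂ z - c = 0 := by
    filter_upwards [hψ0] with z hz
    have h1 := ENNReal.ofReal_eq_zero.mp hz
    have := hhc z
    linarith
  -- transfer the two a.e. statements to `ℝ³`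
  have hGae : ∀ᵐ p : ℝ × ℝ × ℝ, ρ₁ (p.1, p.2.1) + c = 0 := by
    rw [ae_iff]
    set N : Set (ℝ × ℝ) := {q | ¬ ρ₁ q + c = 0} with hN
    have hNnull : volume N = 0 := by simpa [hN] using ae_iff.mp hG2
    have hpre : {p : ℝ × ℝ × ℝ | ¬ ρ₁ (p.1, p.2.1) + c = 0}
        = (MeasurableEquiv.prodAssoc.symm : (ℝ × ℝ × ℝ) ≃ᵐ (ℝ × ℝ) × ℝ)
            ⁻¹' (N ×ˢ (Set.univ : Set ℝ)) := by
      ext p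
      simp [MeasurableEquiv.prodAssoc, Equiv.prodAssoc, hN]
    rw [hpre,
      (MeasurePreserving.symm _ MeasureTheory.volume_preserving_prodAssoc).measure_preimage_equiv,
      Measure.volume_eq_prod, Measure.prod_prod, hNnull, zero_mul]
  have hHae : ∀ᵐ p : ℝ × ℝ × ℝ, ρ₂ p.2.2 - c = 0 := by
    rw [ae_iff]
    have hMnull : volume {z : ℝ | ¬ ρ₂ z - c = 0} = 0 := by simpa using ae_iff.mp hH2
    have hpre : {p : ℝ × ℝ × ℝ | ¬ ρ₂ p.2.2 - c = 0}
        = (Set.univ : Set ℝ) ×ˢ ((Set.univ : Set ℝ) ×ˢ {z : ℝ | ¬ ρ₂ z - c = 0}) := by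
      ext p; simp
    rw [hpre, Measure.volume_eq_prod, Measure.prod_prod,
      Measure.volume_eq_prod, Measure.prod_prod, hMnull, mul_zero, mul_zero]
  -- conclude
  filter_upwards [hGae, hHae] with p hpG hpH
  simp only [Pi.zero_apply]
  linarith
end
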